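/- arXiv:1811.08990 — 3 statements merged into one kernel-verified Lean document; each statement's English description precedes it below -/
import Mathlib

section
/- Let f : ℝ^N → ℝ be differentiable with each ∇_i f coordinate-wise L-Lipschitz, let 0 < γ < 2/L, and let the sequence x^{k+1} differ from x^k only in coordinate i_k with x^{k+1}_{i_k} = x^k_{i_k} − γ(∇_{i_k} f(x^k) + ε^k). Then for every k, f(x^{k+1}) ≤ f(x^k) + (L/4 − 1/(2γ))‖x^{k+1} − x^k‖² + γ‖ε^k‖²/(2 − Lγ). -/
/-!
Along the coordinate line `t ↦ x + t e_j`, `f` is a function of one variable whose derivative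
`∇_j f` moves by at most `L |t|` away from `t = 0`, so it lies below the parabola
`f x + ∇_j f(x) t + (L/2) t²`. For the step `d = -γ(∇_{i_k} f(x^k) + ε^k)` the gap between the
claimed bound and this parabola is `((2 - Lγ) d + 2γ ε^k)² / (4γ(2 - Lγ)) ≥ 0`.
-/

open EuclideanSpace

lemma le_add_deriv_mul_add_sq_of_lipschitz_at_zero {φ ψ : ℝ → ℝ} {L : ℝ}
    (hφ : ∀ t, HasDerivAt φ (ψ t) t) (hψ : ∀ t, |ψ 0 - ψ t| ≤ L * |t|) (d : ℝ) :
    φ d ≤ φ 0 + ψ 0 * d + L / 2 * d ^ 2 := by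
  -- `h` vanishes at 0, is nonincreasing on `(-∞, 0]` and nondecreasing on `[0, ∞)`.
  set h : ℝ → ℝ := fun t => φ 0 + ψ 0 * t + L / 2 * t ^ 2 - φ t
  have hh : ∀ t, HasDerivAt h (ψ 0 + L * t - ψ t) t := fun t => by
    refine ((((hasDerivAt_id t).const_mul (ψ 0)).const_add (φ 0)).add
      ((hasDerivAt_pow 2 t).const_mul (L / 2)) |>.sub (hφ t)).congr_deriv ?_
    ring
  have hcont : Continuous h := continuous_iff_continuousAt.2 fun t => (hh t).continuousAt
  have h0 : h 0 = 0 := by simp [h]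
  suffices 0 ≤ h d by simp only [h] at this; linarith
  rcases le_total 0 d with hd | hd
  · have hmono : MonotoneOn h (Set.Ici 0) :=
      monotoneOn_of_hasDerivWithinAt_nonneg (convex_Ici 0) hcont.continuousOn
        (fun t _ => (hh t).hasDerivWithinAt) fun t ht => by
          rw [interior_Ici, Set.mem_Ioi] at ht
          have := hψ t
          rw [abs_of_pos ht] at this
          linarith [neg_abs_le (ψ 0 - ψ t)]
    simpa [h0] using hmono Set.self_mem_Ici hd hd
  · have hanti : AntitoneOn h (Set.Iic 0) :=
      antitoneOn_of_hasDerivWithinAt_nonpos (convex_Iic 0) hcont.continuousOn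
        (fun t _ => (hh t).hasDerivWithinAt) fun t ht => by
          rw [interior_Iic, Set.mem_Iio] at ht
          have := hψ t
          rw [abs_of_neg ht] at this
          linarith [le_abs_self (ψ 0 - ψ t)]
    simpa [h0] using hanti hd Set.self_mem_Iic hd

section Coordinates

variable {ι : Type*} [DecidableEq ι]

lemma EuclideanSpace.single_eq_smul_single_one (j : ι) (t : ℝ) :
    single j t = t • single j (1 : ℝ) := by
  ext j'; simp [PiLp.single_apply]

lemma EuclideanSpace.eq_add_single_of_forall_ne {x y : EuclideanSpace ℝ ι} {j : ι}
    (hne : ∀ j', j' ≠ j → y j' = x j') : y = x + single j (y j - x j) := by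
  ext j'
  by_cases h : j' = j
  · subst h; simp
  · simp [h, hne j' h]

lemma hasDerivAt_comp_add_single [Fintype ι] {f : EuclideanSpace ℝ ι → ℝ}
    (hf : Differentiable ℝ f) (x : EuclideanSpace ℝ ι) (j : ι) (t : ℝ) :
    HasDerivAt (fun s => f (x + single j s)) (gradient f (x + single j t) j) t := by
  have hline : HasDerivAt (fun s : ℝ => x + single j s) (single j (1 : ℝ)) t := by
    have : (fun s : ℝ => x + single j s) = fun s => x + s • single j (1 : ℝ) :=
      funext fun s => by rw [EuclideanSpace.single_eq_smul_single_one]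
    rw [this]
    simpa using ((hasDerivAt_id t).smul_const (single j (1 : ℝ))).const_add x
  refine ((hf _).hasGradientAt.hasFDerivAt.comp_hasDerivAt t hline).congr_deriv ?_
  rw [InnerProductSpace.toDual_apply_apply, inner_single_right]
  simp

lemma le_add_gradient_mul_add_sq_of_coordinate_lipschitz [Fintype ι]
    {f : EuclideanSpace ℝ ι → ℝ} {L : ℝ} (hf : Differentiable ℝ f)
    (hlip : ∀ (j : ι) (x : EuclideanSpace ℝ ι) (α : ℝ),
      |gradient f x j - gradient f (x + single j α) j| ≤ L * |α|)
    (x : EuclideanSpace ℝ ι) (j : ι) (d : ℝ) :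
    f (x + single j d) ≤ f x + gradient f x j * d + L / 2 * d ^ 2 := by
  have hzero : single j (0 : ℝ) = 0 := (PiLp.single_eq_zero_iff 2 j).2 rfl
  simpa [hzero] using le_add_deriv_mul_add_sq_of_lipschitz_at_zero
    (hasDerivAt_comp_add_single hf x j) (fun t => by simpa [hzero] using hlip j x t) d

end Coordinates

lemma coordinate_descent_step_bound {L γ g e d : ℝ} (hγ : 0 < γ) (hLγ : L * γ < 2)
    (hd : d = -(γ * (g + e))) :
    g * d + L / 2 * d ^ 2 ≤ (L / 4 - 1 / (2 * γ)) * d ^ 2 + γ * e ^ 2 / (2 - L * γ) := by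
  have h2 : 0 < 2 - L * γ := by linarith
  have hg : g = (-d - γ * e) / γ := by field_simp; linarith
  have hslack : (L / 4 - 1 / (2 * γ)) * d ^ 2 + γ * e ^ 2 / (2 - L * γ) - (g * d + L / 2 * d ^ 2)
      = ((2 - L * γ) * d + 2 * γ * e) ^ 2 / (4 * γ * (2 - L * γ)) := by
    rw [hg]; field_simp; ring
  rw [← sub_nonneg, hslack]
  positivity

theorem stmt_3_general {N : ℕ} (f : EuclideanSpace ℝ (Fin N) → ℝ) (L γ : ℝ)
    (hγ : 0 < γ) (hγ2 : γ < 2 / L)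
    (hdiff : Differentiable ℝ f)
    (hlip : ∀ (i : Fin N) (x : EuclideanSpace ℝ (Fin N)) (α : ℝ),
      |gradient f x i - gradient f (x + EuclideanSpace.single i α) i| ≤ L * |α|)
    (x : ℕ → EuclideanSpace ℝ (Fin N)) (i : ℕ → Fin N) (ε : ℕ → ℝ)
    (hupd : ∀ k, x (k + 1) (i k) = x k (i k) - γ * (gradient f (x k) (i k) + ε k))
    (hfix : ∀ k, ∀ j : Fin N, j ≠ i k → x (k + 1) j = x k j) :
    ∀ k : ℕ, f (x (k + 1)) ≤ f (x k) + (L / 4 - 1 / (2 * γ)) * ‖x (k + 1) - x k‖ ^ 2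
      + γ * (ε k) ^ 2 / (2 - L * γ) := by
  intro k
  have hL : 0 < L := (div_pos_iff_of_pos_left two_pos).1 (hγ.trans hγ2)
  have hLγ : L * γ < 2 := by rwa [lt_div_iff₀ hL, mul_comm] at hγ2
  have hstep := EuclideanSpace.eq_add_single_of_forall_ne (hfix k)
  set d := x (k + 1) (i k) - x k (i k) with hd_def
  have hd : d = -(γ * (gradient f (x k) (i k) + ε k)) := by rw [hd_def, hupd k]; ring
  have hnorm : ‖x (k + 1) - x k‖ = |d| := by
    rw [hstep, add_sub_cancel_left, PiLp.norm_single, Real.norm_eq_abs]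
  have hdesc := le_add_gradient_mul_add_sq_of_coordinate_lipschitz hdiff hlip (x k) (i k) d
  rw [← hstep] at hdesc
  rw [hnorm, sq_abs]
  linarith [coordinate_descent_step_bound hγ hLγ hd]

theorem stmt_3 {N : ℕ} (f : EuclideanSpace ℝ (Fin N) → ℝ) (L γ : ℝ) (hL : 0 < L)
    (hγ : 0 < γ) (hγ2 : γ < 2 / L)
    (hdiff : Differentiable ℝ f)
    (hlip : ∀ (i : Fin N) (x : EuclideanSpace ℝ (Fin N)) (α : ℝ),
      |gradient f x i - gradient f (x + EuclideanSpace.single i α) i| ≤ L * |α|)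
    (x : ℕ → EuclideanSpace ℝ (Fin N)) (i : ℕ → Fin N) (ε : ℕ → ℝ)
    (hupd : ∀ k, x (k + 1) (i k) = x k (i k) - γ * (gradient f (x k) (i k) + ε k))
    (hfix : ∀ k, ∀ j : Fin N, j ≠ i k → x (k + 1) j = x k j) :
    ∀ k : ℕ, f (x (k + 1)) ≤ f (x k) + (L / 4 - 1 / (2 * γ)) * ‖x (k + 1) - x k‖ ^ 2
      + γ * (ε k) ^ 2 / (2 - L * γ) :=
  stmt_3_general f L γ hγ hγ2 hdiff hlip x i ε hupd hfix
end

section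
/- Let f : ℝ^N → ℝ have L_r-Lipschitz full gradient, and let x^{k+1}_{i_k} = x^k_{i_k} − γ(∇_{i_k} f(x^k) + ε^k) with other coordinates unchanged. Then for any k ≥ τ ≥ 1, ‖∇_{i_k} f(x^{k−τ+1})‖² ≤ 2 L_r² (τ−1) ∑_{d=k−τ+1}^{k−1} ‖Δ^d‖² + (4/γ²)‖Δ^k‖² + 4‖ε^k‖², where Δ^d = x^{d+1} − x^d. -/
lemma coord_sq_le_norm_sq {N : ℕ} (w : EuclideanSpace ℝ (Fin N)) (j : Fin N) :
    (w j) ^ 2 ≤ ‖w‖ ^ 2 := by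
  have h : ‖w‖ ^ 2 = ∑ i, ‖w i‖ ^ 2 := by
    rw [EuclideanSpace.norm_eq, Real.sq_sqrt (by positivity)]
  rw [h]
  have := Finset.single_le_sum (f := fun i => ‖w i‖ ^ 2) (fun i _ => by positivity)
    (Finset.mem_univ j)
  simpa [sq_abs] using this

theorem stmt_5 {N : ℕ} (f : EuclideanSpace ℝ (Fin N) → ℝ) (Lr γ : ℝ) (hLr : 0 < Lr)
    (hγ : 0 < γ)
    (hdiff : Differentiable ℝ f)
    (hlip : ∀ x y : EuclideanSpace ℝ (Fin N), ‖gradient f x - gradient f y‖ ≤ Lr * ‖x - y‖)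
    (x : ℕ → EuclideanSpace ℝ (Fin N)) (i : ℕ → Fin N) (ε : ℕ → ℝ)
    (hupd : ∀ k, x (k + 1) (i k) = x k (i k) - γ * (gradient f (x k) (i k) + ε k))
    (hfix : ∀ k, ∀ j : Fin N, j ≠ i k → x (k + 1) j = x k j)
    (τ : ℕ) (hτ : 1 ≤ τ) :
    ∀ k : ℕ, τ ≤ k →
      (gradient f (x (k - τ + 1)) (i k)) ^ 2
        ≤ 2 * Lr ^ 2 * (τ - 1 : ℕ) * ∑ d ∈ Finset.Icc (k - τ + 1) (k - 1), ‖x (d + 1) - x d‖ ^ 2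
          + 4 / γ ^ 2 * ‖x (k + 1) - x k‖ ^ 2 + 4 * (ε k) ^ 2 := by
  intro k hk
  set m := k - τ + 1 with hm
  have hmk : m ≤ k := by omega
  have hIcc : Finset.Icc m (k - 1) = Finset.Ico m k := by
    rw [← Finset.Ico_add_one_right_eq_Icc]
    congr 1
    omega
  -- telescoping
  have htel : x k - x m = ∑ d ∈ Finset.Ico m k, (x (d + 1) - x d) := by
    rw [Finset.sum_Ico_eq_sum_range]
    have := Finset.sum_range_sub (f := fun j => x (m + j)) (k - m)
    simp only [add_assoc] at this ⊢
    rw [this]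
    simp [Nat.add_sub_cancel' hmk]
  set S := ∑ d ∈ Finset.Icc m (k - 1), ‖x (d + 1) - x d‖ ^ 2 with hS
  have hSnn : 0 ≤ S := by positivity
  have hcard : (Finset.Ico m k).card = τ - 1 := by
    rw [Nat.card_Ico]; omega
  -- norm of difference bound
  have hnorm : ‖x k - x m‖ ^ 2 ≤ (τ - 1 : ℕ) * S := by
    have h1 : ‖x k - x m‖ ≤ ∑ d ∈ Finset.Ico m k, ‖x (d + 1) - x d‖ := by
      rw [htel]; exact norm_sum_le _ _
    have h2 : (∑ d ∈ Finset.Ico m k, ‖x (d + 1) - x d‖) ^ 2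
        ≤ (Finset.Ico m k).card * ∑ d ∈ Finset.Ico m k, ‖x (d + 1) - x d‖ ^ 2 :=
      sq_sum_le_card_mul_sum_sq
    have h3 : ‖x k - x m‖ ^ 2 ≤ (∑ d ∈ Finset.Ico m k, ‖x (d + 1) - x d‖) ^ 2 :=
      pow_le_pow_left₀ (norm_nonneg _) h1 2
    rw [hS, hIcc]
    calc ‖x k - x m‖ ^ 2 ≤ _ := h3
      _ ≤ _ := h2
      _ = _ := by rw [hcard]
  set a := gradient f (x m) (i k) with ha
  set b := gradient f (x k) (i k) with hb
  -- Lipschitz bound on a - b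
  have hab : (a - b) ^ 2 ≤ Lr ^ 2 * ((τ - 1 : ℕ) * S) := by
    have h1 : (a - b) ^ 2 ≤ ‖gradient f (x m) - gradient f (x k)‖ ^ 2 := by
      have := coord_sq_le_norm_sq (gradient f (x m) - gradient f (x k)) (i k)
      simpa using this
    have h2 : ‖gradient f (x m) - gradient f (x k)‖ ^ 2 ≤ (Lr * ‖x m - x k‖) ^ 2 :=
      pow_le_pow_left₀ (norm_nonneg _) (hlip _ _) 2
    have h3 : ‖x m - x k‖ ^ 2 = ‖x k - x m‖ ^ 2 := by rw [norm_sub_rev]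
    calc (a - b) ^ 2 ≤ _ := h1
      _ ≤ (Lr * ‖x m - x k‖) ^ 2 := h2
      _ = Lr ^ 2 * ‖x k - x m‖ ^ 2 := by rw [mul_pow, h3]
      _ ≤ Lr ^ 2 * ((τ - 1 : ℕ) * S) := by
          exact mul_le_mul_of_nonneg_left hnorm (by positivity)
  -- update bound on b
  have hcoord : ((x (k + 1) - x k) (i k)) ^ 2 ≤ ‖x (k + 1) - x k‖ ^ 2 :=
    coord_sq_le_norm_sq _ _
  have hbval : b = -((x (k + 1) - x k) (i k)) / γ - ε k := by
    have h := hupd k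
    have hsub : (x (k + 1) - x k) (i k) = x (k + 1) (i k) - x k (i k) := by simp
    rw [hsub]
    field_simp
    linarith [h]
  have hbsq : b ^ 2 ≤ 2 * (‖x (k + 1) - x k‖ ^ 2 / γ ^ 2) + 2 * (ε k) ^ 2 := by
    rw [hbval]
    have hγ2 : (0:ℝ) < γ ^ 2 := by positivity
    have h1 : (-((x (k + 1) - x k) (i k)) / γ) ^ 2 ≤ ‖x (k + 1) - x k‖ ^ 2 / γ ^ 2 := by
      rw [div_pow, neg_pow]
      apply div_le_div_of_nonneg_right _ hγ2.le
      · simpa using hcoord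
    nlinarith [sq_nonneg (-((x (k + 1) - x k) (i k)) / γ + ε k)]
  have hγ2 : (0:ℝ) < γ ^ 2 := by positivity
  have key : a ^ 2 ≤ 2 * (a - b) ^ 2 + 2 * b ^ 2 := by nlinarith [sq_nonneg (a - 2 * b)]
  have : 4 / γ ^ 2 * ‖x (k + 1) - x k‖ ^ 2 = 4 * (‖x (k + 1) - x k‖ ^ 2 / γ ^ 2) := by
    ring
  rw [this]
  nlinarith [hab, hbsq, key]
end

section
/- In the noiseless case (ε^k = 0), under the same assumptions, for k ≥ τ: ‖∇_{i_k} f(x^{k−τ+1})‖² ≤ 2 L_r² (τ−1) ∑_{d=k−τ+1}^{k−1} ‖Δ^d‖² + (2/γ²)‖Δ^k‖². -/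
theorem stmt_6 {N : ℕ} (f : EuclideanSpace ℝ (Fin N) → ℝ) (Lr γ : ℝ) (hLr : 0 < Lr)
    (hγ : 0 < γ)
    (hdiff : Differentiable ℝ f)
    (hlip : ∀ x y : EuclideanSpace ℝ (Fin N), ‖gradient f x - gradient f y‖ ≤ Lr * ‖x - y‖)
    (x : ℕ → EuclideanSpace ℝ (Fin N)) (i : ℕ → Fin N) 
    (hupd : ∀ k, x (k + 1) (i k) = x k (i k) - γ * (gradient f (x k) (i k)))
    (hfix : ∀ k, ∀ j : Fin N, j ≠ i k → x (k + 1) j = x k j)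
    (τ : ℕ) (hτ : 1 ≤ τ) :
    ∀ k : ℕ, τ ≤ k →
      (gradient f (x (k - τ + 1)) (i k)) ^ 2
        ≤ 2 * Lr ^ 2 * (τ - 1 : ℕ) * ∑ d ∈ Finset.Icc (k - τ + 1) (k - 1), ‖x (d + 1) - x d‖ ^ 2
          + 2 / γ ^ 2 * ‖x (k + 1) - x k‖ ^ 2 := by
  intro k hk
  set m := k - τ + 1 with hm
  set g1 := gradient f (x m) (i k) with hg1
  set g2 := gradient f (x k) (i k) with hg2
  -- coordinate bound helper
  have coord : ∀ v : EuclideanSpace ℝ (Fin N), (v (i k)) ^ 2 ≤ ‖v‖ ^ 2 := by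
    intro v
    have h1 : ‖v‖ ^ 2 = ∑ j, (v j) ^ 2 := by
      rw [EuclideanSpace.norm_eq, Real.sq_sqrt (by positivity)]
      simp [Real.norm_eq_abs, sq_abs]
    rw [h1]
    exact Finset.single_le_sum (f := fun j => (v j) ^ 2)
      (fun j _ => sq_nonneg _) (Finset.mem_univ (i k))
  -- Step A : (g1 - g2)^2 ≤ Lr^2 * (τ-1) * ∑ ...
  have hmk : m ≤ k := by omega
  have htel : ‖x m - x k‖ ≤ ∑ d ∈ Finset.Icc m (k - 1), ‖x (d + 1) - x d‖ := by
    have h := dist_le_Ico_sum_dist x hmk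
    have hIco : Finset.Ico m k = Finset.Icc m (k - 1) := by
      rw [← Finset.Ico_add_one_right_eq_Icc]; congr 1; omega
    rw [dist_eq_norm] at h
    calc ‖x m - x k‖ ≤ ∑ d ∈ Finset.Ico m k, dist (x d) (x (d + 1)) := h
      _ = ∑ d ∈ Finset.Icc m (k - 1), ‖x (d + 1) - x d‖ := by
          rw [hIco]; exact Finset.sum_congr rfl fun d _ => by
            rw [dist_eq_norm, norm_sub_rev]
  have hcard : (Finset.Icc m (k - 1)).card = τ - 1 := by
    rw [Nat.card_Icc]; omega
  have hA : (g1 - g2) ^ 2 ≤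
      Lr ^ 2 * (τ - 1 : ℕ) * ∑ d ∈ Finset.Icc m (k - 1), ‖x (d + 1) - x d‖ ^ 2 := by
    have h1 : (g1 - g2) ^ 2 ≤ ‖gradient f (x m) - gradient f (x k)‖ ^ 2 := by
      have := coord (gradient f (x m) - gradient f (x k))
      simpa using this
    have h2 : ‖gradient f (x m) - gradient f (x k)‖ ^ 2 ≤ (Lr * ‖x m - x k‖) ^ 2 := by
      have := hlip (x m) (x k)
      exact pow_le_pow_left₀ (norm_nonneg _) this 2
    have h3 : ‖x m - x k‖ ^ 2 ≤
        (τ - 1 : ℕ) * ∑ d ∈ Finset.Icc m (k - 1), ‖x (d + 1) - x d‖ ^ 2 := by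
      calc ‖x m - x k‖ ^ 2 ≤ (∑ d ∈ Finset.Icc m (k - 1), ‖x (d + 1) - x d‖) ^ 2 := by
            apply pow_le_pow_left₀ (norm_nonneg _) htel
        _ ≤ (Finset.Icc m (k - 1)).card * ∑ d ∈ Finset.Icc m (k - 1), ‖x (d + 1) - x d‖ ^ 2 :=
            sq_sum_le_card_mul_sum_sq
        _ = (τ - 1 : ℕ) * ∑ d ∈ Finset.Icc m (k - 1), ‖x (d + 1) - x d‖ ^ 2 := by
            rw [hcard]
    calc (g1 - g2) ^ 2 ≤ (Lr * ‖x m - x k‖) ^ 2 := le_trans h1 h2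
      _ = Lr ^ 2 * ‖x m - x k‖ ^ 2 := by ring
      _ ≤ Lr ^ 2 * ((τ - 1 : ℕ) * ∑ d ∈ Finset.Icc m (k - 1), ‖x (d + 1) - x d‖ ^ 2) := by
          exact mul_le_mul_of_nonneg_left h3 (by positivity)
      _ = Lr ^ 2 * (τ - 1 : ℕ) * ∑ d ∈ Finset.Icc m (k - 1), ‖x (d + 1) - x d‖ ^ 2 := by ring
  -- Step B : g2^2 ≤ ‖Δ^k‖^2 / γ^2
  have hB : g2 ^ 2 ≤ ‖x (k + 1) - x k‖ ^ 2 / γ ^ 2 := by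
    have hco : (x (k + 1) - x k) (i k) = -(γ * g2) := by
      have := hupd k
      simp only [PiLp.sub_apply]
      rw [this, hg2]; ring
    have h1 : ((x (k + 1) - x k) (i k)) ^ 2 ≤ ‖x (k + 1) - x k‖ ^ 2 := coord _
    rw [hco] at h1
    have h2 : γ ^ 2 * g2 ^ 2 ≤ ‖x (k + 1) - x k‖ ^ 2 := by nlinarith
    rw [le_div_iff₀ (by positivity)]
    nlinarith
  -- combine
  have hsq : g1 ^ 2 ≤ 2 * (g1 - g2) ^ 2 + 2 * g2 ^ 2 := by nlinarith [sq_nonneg (g1 - 2 * g2)]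
  have : 2 / γ ^ 2 * ‖x (k + 1) - x k‖ ^ 2 = 2 * (‖x (k + 1) - x k‖ ^ 2 / γ ^ 2) := by
    field_simp
  rw [this]
  calc g1 ^ 2 ≤ 2 * (g1 - g2) ^ 2 + 2 * g2 ^ 2 := hsq
    _ ≤ 2 * (Lr ^ 2 * (τ - 1 : ℕ) * ∑ d ∈ Finset.Icc m (k - 1), ‖x (d + 1) - x d‖ ^ 2)
        + 2 * (‖x (k + 1) - x k‖ ^ 2 / γ ^ 2) := by
        gcongr
    _ = 2 * Lr ^ 2 * (τ - 1 : ℕ) * ∑ d ∈ Finset.Icc m (k - 1), ‖x (d + 1) - x d‖ ^ 2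
        + 2 * (‖x (k + 1) - x k‖ ^ 2 / γ ^ 2) := by ring
end
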